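/- Let H be a Hermitian positive definite n×n matrix, P an orthogonal projection of rank m, and H_P = PHP + (I−P)H(I−P). Define η(f)² = ((f, H⁻¹f) − (f, H_P⁻¹f))/(f, H⁻¹f) for nonzero f in ran(P). Then 0 ≤ η(f)² < 1 for all nonzero f ∈ ran(P). -/

import Mathlib

open Matrix
open scoped ComplexOrder

private lemma dot_shift {n : ℕ} (A : Matrix (Fin n) (Fin n) ℂ) (x y : Fin n → ℂ) :
    star (A.mulVec x) ⬝ᵥ y = star x ⬝ᵥ Aᴴ.mulVec y := by
  rw [star_mulVec, ← dotProduct_mulVec]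

private lemma re_dot_comm {n : ℕ} (x y : Fin n → ℂ) :
    (star x ⬝ᵥ y).re = (star y ⬝ᵥ x).re := by
  rw [star_dotProduct]; simp

private lemma proj_dot {n : ℕ} (P : Matrix (Fin n) (Fin n) ℂ) (hP : P.IsHermitian)
    (f g : Fin n → ℂ) (hPf : P.mulVec f = f) :
    star f ⬝ᵥ P.mulVec g = star f ⬝ᵥ g := by
  conv_lhs => rw [← hP.eq]
  rw [← dot_shift, hPf]

private lemma HP_posdef {n : ℕ} (H P : Matrix (Fin n) (Fin n) ℂ)
    (hH : H.PosDef) (hP : P.IsHermitian) :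
    (P * H * P + (1 - P) * H * (1 - P)).PosDef := by
  have hQ : (1 - P).IsHermitian := Matrix.isHermitian_one.sub hP
  refine Matrix.PosDef.of_dotProduct_mulVec_pos ?_ ?_
  · show _ = _
    simp only [conjTranspose_add, conjTranspose_mul, hP.eq, hQ.eq, hH.1.eq, Matrix.mul_assoc]
  · intro x hx
    have key : star x ⬝ᵥ (P * H * P + (1 - P) * H * (1 - P)).mulVec x
        = star (P.mulVec x) ⬝ᵥ H.mulVec (P.mulVec x)
          + star ((1 - P).mulVec x) ⬝ᵥ H.mulVec ((1 - P).mulVec x) := by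
      rw [dot_shift P, dot_shift (1 - P), hP.eq, hQ.eq]
      simp [add_mulVec, mulVec_mulVec, Matrix.mul_assoc, dotProduct_add]
    rw [key]
    rcases eq_or_ne (P.mulVec x) 0 with h1 | h1
    · have h2 : (1 - P).mulVec x ≠ 0 := by
        intro h2
        apply hx
        have := congrArg₂ (· + ·) h1 h2
        simpa [sub_mulVec, one_mulVec] using this
      have := hH.dotProduct_mulVec_pos h2
      have h0 := hH.posSemidef.dotProduct_mulVec_nonneg (P.mulVec x)
      exact lt_of_lt_of_le this (by rw [h1] at h0 ⊢; exact le_add_of_nonneg_left h0)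
    · have := hH.dotProduct_mulVec_pos h1
      have h0 := hH.posSemidef.dotProduct_mulVec_nonneg ((1 - P).mulVec x)
      exact lt_of_lt_of_le this (le_add_of_nonneg_right h0)

/-- With `H` Hermitian positive definite, `P` a rank-`m` orthogonal projection and
`H_P = PHP + (I−P)H(I−P)`, the approximation defect
`η(f)² = ((f,H⁻¹f) − (f,H_P⁻¹f))/(f,H⁻¹f)` satisfies `0 ≤ η(f)² < 1` for all nonzero
`f` in the range of `P`. -/
theorem approximation_defect_lt_one
    {n : ℕ} (H P : Matrix (Fin n) (Fin n) ℂ) (m : ℕ)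
    (hH : H.PosDef) (hP : P.IsHermitian) (hP2 : P * P = P)
    (hrank : P.rank = m) :
    ∀ f : Fin n → ℂ, f ≠ 0 → P.mulVec f = f →
      0 ≤ ((dotProduct (star f) (H⁻¹.mulVec f)).re -
            (dotProduct (star f)
              ((P * H * P + (1 - P) * H * (1 - P))⁻¹.mulVec f)).re) /
          (dotProduct (star f) (H⁻¹.mulVec f)).re ∧
      ((dotProduct (star f) (H⁻¹.mulVec f)).re -
            (dotProduct (star f)
              ((P * H * P + (1 - P) * H * (1 - P))⁻¹.mulVec f)).re) /
          (dotProduct (star f) (H⁻¹.mulVec f)).re < 1 := by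
  intro f hf hPf
  set HP : Matrix (Fin n) (Fin n) ℂ := P * H * P + (1 - P) * H * (1 - P) with hHPdef
  have hHP : HP.PosDef := HP_posdef H P hH hP
  have hQ : (1 - P).IsHermitian := Matrix.isHermitian_one.sub hP
  set a : ℝ := (star f ⬝ᵥ H⁻¹.mulVec f).re with ha
  set b : ℝ := (star f ⬝ᵥ HP⁻¹.mulVec f).re with hb
  have ha_pos : 0 < a := hH.inv.re_dotProduct_pos hf
  have hb_pos : 0 < b := hHP.inv.re_dotProduct_pos hf
  -- g₀ = HP⁻¹ f, and HP g₀ = f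
  set g : Fin n → ℂ := HP⁻¹.mulVec f with hg
  have hHPg : HP.mulVec g = f := by
    rw [hg, mulVec_mulVec, mul_nonsing_inv _ hHP.det_pos.ne'.isUnit, one_mulVec]
  set u : Fin n → ℂ := P.mulVec g with hu
  set v : Fin n → ℂ := (1 - P).mulVec g with hv
  -- b = Re⟪g, HP g⟫ = Re⟪u,Hu⟫ + Re⟪v,Hv⟫
  have hb1 : b = (star g ⬝ᵥ HP.mulVec g).re := by
    rw [hb, ← hHPg, dot_shift, hHP.1.eq, hg]
  have hsplit : star g ⬝ᵥ HP.mulVec g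
      = star u ⬝ᵥ H.mulVec u + star v ⬝ᵥ H.mulVec v := by
    rw [hu, hv, dot_shift P, dot_shift (1 - P), hP.eq, hQ.eq, hHPdef]
    simp [add_mulVec, mulVec_mulVec, Matrix.mul_assoc, dotProduct_add]
  -- b as Re⟪f, u⟫
  have hfu : (star f ⬝ᵥ u).re = b := by
    rw [hu, proj_dot P hP f g hPf]
  -- variational inequality: 0 ≤ Re⟪w, Hw⟫ with w = u − H⁻¹ f
  have hHinv : H⁻¹.IsHermitian := hH.1.inv
  have hHHinvf : H.mulVec (H⁻¹.mulVec f) = f := by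
    rw [mulVec_mulVec, mul_nonsing_inv _ hH.det_pos.ne'.isUnit, one_mulVec]
  set w : Fin n → ℂ := u - H⁻¹.mulVec f with hw
  have hwpos : 0 ≤ (star w ⬝ᵥ H.mulVec w).re := hH.posSemidef.re_dotProduct_nonneg w
  have hexp : (star w ⬝ᵥ H.mulVec w).re
      = (star u ⬝ᵥ H.mulVec u).re - 2 * b + a := by
    have e1 : star w ⬝ᵥ H.mulVec w
        = star u ⬝ᵥ H.mulVec u - star u ⬝ᵥ f
          - star (H⁻¹.mulVec f) ⬝ᵥ H.mulVec u + star f ⬝ᵥ H⁻¹.mulVec f := by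
      rw [hw]
      simp only [star_sub, sub_dotProduct, mulVec_sub, dotProduct_sub, hHHinvf]
      ring_nf
      rw [show star (H⁻¹.mulVec f) ⬝ᵥ f = star f ⬝ᵥ H⁻¹.mulVec f from by
        rw [dot_shift, hHinv.eq]]
    have e2 : (star (H⁻¹.mulVec f) ⬝ᵥ H.mulVec u).re = b := by
      rw [dot_shift H⁻¹, hHinv.eq, mulVec_mulVec, nonsing_inv_mul _ hH.det_pos.ne'.isUnit, one_mulVec, hfu]
    have e3 : (star u ⬝ᵥ f).re = b := by rw [re_dot_comm, hfu]
    rw [e1]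
    simp only [Complex.sub_re, Complex.add_re, e2, e3, ← ha]
    ring
  -- conclude b ≤ a
  have hvpos : 0 ≤ (star v ⬝ᵥ H.mulVec v).re := hH.posSemidef.re_dotProduct_nonneg v
  have huHu : (star u ⬝ᵥ H.mulVec u).re = b - (star v ⬝ᵥ H.mulVec v).re := by
    have := congrArg Complex.re hsplit
    rw [← hb1] at this
    simp only [Complex.add_re] at this
    linarith
  have hba : b ≤ a := by rw [huHu] at hexp; linarith
  constructor
  · exact div_nonneg (by linarith) ha_pos.le
  · rw [div_lt_one ha_pos]; linarith
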